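/- arXiv:0904.2752 — 2 statements merged into one kernel-verified Lean document; each statement's English description precedes it below -/
import Mathlib

section
/- Let B : Ω × [0,∞) × Γ → ℝ be a regular field on Γ, i.e. (a) B is ℱ⊗𝔅([0,∞))⊗𝔅(Γ)-measurable, (b) for each x ∈ Γ there is an event Ω_x with P(Ω_x)=1 such that for every ω ∈ Ω_x the path t ↦ B_t(ω,x) is continuous on [0,∞), and (c) for each t ∈ [0,∞) and x ∈ Γ the random variable ω ↦ B_t(ω,x) is ℱ_t-measurable. Then there exists a field A : Ω × [0,∞) × Γ → ℝ satisfying (a) and (c) such that for EVERY ω ∈ Ω and x ∈ Γ the path t ↦ A_t(ω,x) is continuous on [0,∞), and such that for each x ∈ Γ, with probability one A_t(x) = B_t(x) for all t ∈ [0,∞). -/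
/-!
Paths are only almost surely continuous, so we first single out, by countably many conditions,
the paths that are uniformly continuous on the nonnegative fractions of every `[0, N]`; this
set is measurable and contains every continuous path. On it we replace the path by the
continuous extension of its restriction to the fractions, elsewhere by `0`. The extension at
`t` is the limit of the path at the fractions `⌊t n⌋ / n ≤ t`, so the new field is a pointwise
limit of fields that are jointly measurable and, because those times never exceed `t`,
`ℱ_t`-adapted; the exceptional set is null, hence in every `ℱ_t` by completeness.
-/

open MeasureTheory Filter Topology Set
open scoped NNReal

theorem UniformContinuousOn.exists_tendsto_nhdsWithin {α β : Type*} [UniformSpace α]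
    [UniformSpace β] [CompleteSpace β] {f : α → β} {s : Set α} {a : α}
    (hf : UniformContinuousOn f s) (ha : a ∈ closure s) :
    ∃ y, Tendsto f (𝓝[s] a) (𝓝 y) := by
  have := mem_closure_iff_nhdsWithin_neBot.1 ha
  refine cauchy_map_iff_exists_tendsto.1 (cauchy_map_iff.2 ⟨inferInstance, hf.mono_left ?_⟩)
  refine le_inf ((Filter.prod_mono nhdsWithin_le_nhds nhdsWithin_le_nhds).trans cauchy_nhds.2) ?_
  rw [← prod_principal_principal]
  exact Filter.prod_mono inf_le_right inf_le_right

theorem measurableSet_setOf_uniformContinuousOn {X α β : Type*} [MeasurableSpace X]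
    [PseudoMetricSpace α] [PseudoMetricSpace β] [MeasurableSpace β] [OpensMeasurableSpace β]
    [SecondCountableTopology β] {s : Set α} (hs : s.Countable) {g : X → α → β}
    (hg : ∀ a ∈ s, Measurable fun p => g p a) :
    MeasurableSet {p | UniformContinuousOn (g p) s} := by
  simp only [Metric.uniformity_basis_dist_inv_nat_succ.uniformContinuousOn_iff
      Metric.uniformity_basis_dist_inv_nat_succ,
    true_and, forall_const, mem_ofPred_eq, ofPred_forall, ofPred_exists]
  exact .iInter fun k => .iUnion fun m => .biInter hs fun a ha => .biInter hs fun b hb =>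
    .iInter fun _ => measurableSet_lt ((hg a ha).dist (hg b hb)) measurable_const

namespace ContinuousModification

noncomputable def floorApprox (n : ℕ) (t : ℝ≥0) : ℝ≥0 := ⌊t * n⌋₊ / n

def fractions : Set ℝ≥0 := range fun p : ℕ × ℕ => (p.1 : ℝ≥0) / p.2

lemma floorApprox_mem_fractions (n : ℕ) (t : ℝ≥0) : floorApprox n t ∈ fractions :=
  ⟨(⌊t * n⌋₊, n), rfl⟩

lemma floorApprox_le (n : ℕ) (t : ℝ≥0) : floorApprox n t ≤ t := by
  rcases n.eq_zero_or_pos with rfl | hn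
  · simp [floorApprox]
  · rw [floorApprox, div_le_iff₀ (by exact_mod_cast hn)]
    exact Nat.floor_le (by positivity)

@[fun_prop]
lemma measurable_floorApprox (n : ℕ) : Measurable (floorApprox n) := by
  unfold floorApprox
  fun_prop

lemma tendsto_floorApprox (t : ℝ≥0) : Tendsto (floorApprox · t) atTop (𝓝 t) := by
  rw [← NNReal.tendsto_coe]
  convert (tendsto_nat_floor_mul_div_atTop t.coe_nonneg).comp tendsto_natCast_atTop_atTop
    using 2 with n
  simp only [floorApprox, Function.comp_apply, NNReal.coe_div, NNReal.coe_natCast]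
  -- `⌊t * n⌋₊` in `ℝ≥0` and `⌊(t : ℝ) * n⌋₊` in `ℝ` agree definitionally
  rfl

lemma dense_fractions : Dense fractions := fun t =>
  mem_closure_of_tendsto (tendsto_floorApprox t) (.of_forall (floorApprox_mem_fractions · t))

lemma countable_fractions : fractions.Countable := countable_range _

section
variable {E : Type*} [NormedAddCommGroup E]

def UniformContinuousOnFractionsIic (f : ℝ≥0 → E) : Prop :=
  ∀ N : ℕ, UniformContinuousOn f (fractions ∩ Iic (N : ℝ≥0))

lemma uniformContinuousOnFractionsIic_of_continuous {f : ℝ≥0 → E} (hf : Continuous f) :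
    UniformContinuousOnFractionsIic f := fun _ =>
  (isCompact_Icc.uniformContinuousOn_of_continuous hf.continuousOn).mono
    fun _ ht => ⟨zero_le, ht.2⟩

lemma measurableSet_setOf_uniformContinuousOnFractionsIic [MeasurableSpace E] [BorelSpace E]
    [SecondCountableTopology E] {X : Type*} [MeasurableSpace X] {g : X → ℝ≥0 → E}
    (hg : ∀ t, Measurable fun p => g p t) :
    MeasurableSet {p | UniformContinuousOnFractionsIic (g p)} := by
  simp only [UniformContinuousOnFractionsIic, ofPred_forall]
  exact .iInter fun N => measurableSet_setOf_uniformContinuousOn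
    (countable_fractions.mono inter_subset_left) fun t _ => hg t

open Classical in
noncomputable def continuousVersion (f : ℝ≥0 → E) : ℝ≥0 → E :=
  if UniformContinuousOnFractionsIic f then extendFrom fractions f else 0

lemma continuousVersion_eq_self {f : ℝ≥0 → E} (hf : Continuous f) :
    continuousVersion f = f := by
  rw [continuousVersion, if_pos (uniformContinuousOnFractionsIic_of_continuous hf)]
  exact funext fun t => extendFrom_eq (dense_fractions t)
    ((hf.tendsto t).mono_left nhdsWithin_le_nhds)

variable [CompleteSpace E]

lemma UniformContinuousOnFractionsIic.exists_tendsto {f : ℝ≥0 → E}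
    (hf : UniformContinuousOnFractionsIic f) (t : ℝ≥0) :
    ∃ y, Tendsto f (𝓝[fractions] t) (𝓝 y) := by
  obtain ⟨N, hN⟩ := exists_nat_gt t
  have hloc : 𝓝[fractions ∩ Iic (N : ℝ≥0)] t = 𝓝[fractions] t :=
    nhdsWithin_inter_of_mem' (mem_nhdsWithin_of_mem_nhds (Iic_mem_nhds hN))
  have ht : t ∈ closure (fractions ∩ Iic (N : ℝ≥0)) := by
    rw [mem_closure_iff_nhdsWithin_neBot, hloc]
    exact mem_closure_iff_nhdsWithin_neBot.1 (dense_fractions t)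
  rw [← hloc]
  exact (hf N).exists_tendsto_nhdsWithin ht

lemma continuous_continuousVersion (f : ℝ≥0 → E) : Continuous (continuousVersion f) := by
  unfold continuousVersion
  split_ifs with hf
  · exact continuous_extendFrom dense_fractions hf.exists_tendsto
  · exact continuous_const

lemma tendsto_continuousVersion {f : ℝ≥0 → E} (hf : UniformContinuousOnFractionsIic f)
    (t : ℝ≥0) :
    Tendsto (fun n => f (floorApprox n t)) atTop (𝓝 (continuousVersion f t)) := by
  rw [continuousVersion, if_pos hf]
  exact (tendsto_extendFrom (hf.exists_tendsto t)).comp (tendsto_nhdsWithin_iff.2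
    ⟨tendsto_floorApprox t, .of_forall (floorApprox_mem_fractions · t)⟩)

lemma measurable_continuousVersion_comp [MeasurableSpace E] [BorelSpace E] {X : Type*}
    {mX : MeasurableSpace X} {g : X → ℝ≥0 → E} {τ : X → ℝ≥0}
    (hS : MeasurableSet {p | UniformContinuousOnFractionsIic (g p)})
    (hg : ∀ n, Measurable fun p => g p (floorApprox n (τ p))) :
    Measurable fun p => continuousVersion (g p) (τ p) := by
  classical
  refine measurable_of_tendsto_metrizable
    (f := fun n p =>
      if UniformContinuousOnFractionsIic (g p) then g p (floorApprox n (τ p)) else 0)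
    (fun n => (hg n).ite hS measurable_const) (tendsto_pi_nhds.2 fun p => ?_)
  by_cases hp : UniformContinuousOnFractionsIic (g p)
  · simpa [hp] using tendsto_continuousVersion hp (τ p)
  · simp [hp, continuousVersion]

end

end ContinuousModification

open ContinuousModification in
theorem regular_field_has_strongly_regular_modification_general
    {Ω : Type*} {m0 : MeasurableSpace Ω} (P : Measure Ω)
    (F : Filtration ℝ≥0 m0)
    -- completeness of the filtration with respect to `(ℱ, P)`
    (hcomplete : ∀ (t : ℝ≥0) (s : Set Ω), MeasurableSet s → P s = 0 →
      MeasurableSet[F t] s)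
    {d : ℕ} (Γ : Set (EuclideanSpace ℝ (Fin d)))
    (B : Ω → ℝ≥0 → EuclideanSpace ℝ (Fin d) → ℝ)
    -- (a) joint measurability with respect to `ℱ ⊗ 𝔅([0,∞)) ⊗ 𝔅(Γ)`
    (ha : Measurable fun p : Ω × ℝ≥0 × Γ => B p.1 p.2.1 (p.2.2 : EuclideanSpace ℝ (Fin d)))
    -- (b) for each `x ∈ Γ`, almost surely continuous paths
    (hb : ∀ x ∈ Γ, ∀ᵐ ω ∂P, Continuous fun t => B ω t x)
    -- (c) adaptedness at each time and space point
    (hc : ∀ (t : ℝ≥0), ∀ x ∈ Γ, @Measurable Ω ℝ (F t) _ fun ω => B ω t x) :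
    ∃ A : Ω → ℝ≥0 → EuclideanSpace ℝ (Fin d) → ℝ,
      (Measurable fun p : Ω × ℝ≥0 × Γ => A p.1 p.2.1 (p.2.2 : EuclideanSpace ℝ (Fin d))) ∧
      (∀ (t : ℝ≥0), ∀ x ∈ Γ, @Measurable Ω ℝ (F t) _ fun ω => A ω t x) ∧
      (∀ ω, ∀ x ∈ Γ, Continuous fun t => A ω t x) ∧
      (∀ x ∈ Γ, ∀ᵐ ω ∂P, ∀ t : ℝ≥0, A ω t x = B ω t x) := by
  have hB : ∀ t, Measurable fun p : Ω × ℝ≥0 × Γ => B p.1 t p.2.2 :=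
    fun t => ha.comp (f := fun p : Ω × ℝ≥0 × Γ => (p.1, t, p.2.2)) (by fun_prop)
  refine ⟨fun ω t x => continuousVersion (B ω · x) t, ?_, ?_,
    fun ω x _ => continuous_continuousVersion _, ?_⟩
  · exact measurable_continuousVersion_comp
      (measurableSet_setOf_uniformContinuousOnFractionsIic hB)
      fun n => ha.comp (f := fun p : Ω × ℝ≥0 × Γ => (p.1, floorApprox n p.2.1, p.2.2))
        (by fun_prop)
  · intro t x hx
    have hS : MeasurableSet {ω | UniformContinuousOnFractionsIic (B ω · x)} :=
      measurableSet_setOf_uniformContinuousOnFractionsIic fun s =>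
        ha.comp (f := fun ω => (ω, s, (⟨x, hx⟩ : Γ))) (by fun_prop)
    have hnull : P {ω | UniformContinuousOnFractionsIic (B ω · x)}ᶜ = 0 :=
      measure_mono_null
        (fun _ hω hcont => hω (uniformContinuousOnFractionsIic_of_continuous hcont))
        (ae_iff.1 (hb x hx))
    exact measurable_continuousVersion_comp (mX := F t)
      (by simpa using (hcomplete t _ hS.compl hnull).compl)
      fun n => (hc _ x hx).mono (F.mono (floorApprox_le n t)) le_rfl
  · intro x hx
    filter_upwards [hb x hx] with ω hω t
    rw [continuousVersion_eq_self hω]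

/-- Lemma 4.12.1 of the paper.
If `B` is a regular field on `Γ` (jointly measurable, `ℱ_t`-measurable at each time and
space point, and with, for each `x ∈ Γ`, almost surely continuous paths), then there is a
field `A` with the same measurability properties whose paths are continuous for *every*
`ω` and `x ∈ Γ`, and which is, for each `x ∈ Γ`, almost surely a modification of `B`
(indistinguishable from it). -/
theorem regular_field_has_strongly_regular_modification
    {Ω : Type*} {m0 : MeasurableSpace Ω} (P : Measure Ω) [IsProbabilityMeasure P]
    (F : Filtration ℝ≥0 m0)
    -- completeness of the filtration with respect to `(ℱ, P)`
    (hcomplete : ∀ (t : ℝ≥0) (s : Set Ω), MeasurableSet s → P s = 0 →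
      MeasurableSet[F t] s)
    {d : ℕ} (Γ : Set (EuclideanSpace ℝ (Fin d))) (hΓ : MeasurableSet Γ)
    (B : Ω → ℝ≥0 → EuclideanSpace ℝ (Fin d) → ℝ)
    -- (a) joint measurability with respect to `ℱ ⊗ 𝔅([0,∞)) ⊗ 𝔅(Γ)`
    (ha : Measurable fun p : Ω × ℝ≥0 × Γ => B p.1 p.2.1 (p.2.2 : EuclideanSpace ℝ (Fin d)))
    -- (b) for each `x ∈ Γ`, almost surely continuous paths
    (hb : ∀ x ∈ Γ, ∀ᵐ ω ∂P, Continuous fun t => B ω t x)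
    -- (c) adaptedness at each time and space point
    (hc : ∀ (t : ℝ≥0), ∀ x ∈ Γ, @Measurable Ω ℝ (F t) _ fun ω => B ω t x) :
    ∃ A : Ω → ℝ≥0 → EuclideanSpace ℝ (Fin d) → ℝ,
      (Measurable fun p : Ω × ℝ≥0 × Γ => A p.1 p.2.1 (p.2.2 : EuclideanSpace ℝ (Fin d))) ∧
      (∀ (t : ℝ≥0), ∀ x ∈ Γ, @Measurable Ω ℝ (F t) _ fun ω => A ω t x) ∧
      (∀ ω, ∀ x ∈ Γ, Continuous fun t => A ω t x) ∧
      (∀ x ∈ Γ, ∀ᵐ ω ∂P, ∀ t : ℝ≥0, A ω t x = B ω t x) :=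
  regular_field_has_strongly_regular_modification_general P F hcomplete Γ B ha hb hc
end

section
/- Let X and C be [0,∞]-valued random variables on a probability space (Ω,ℱ,P) and let N > 0 be a constant such that for all ε, δ > 0 one has P(X ≥ δ) ≤ P(C ≥ ε) + (N/δ)·E[min(ε, C)]. Then for every q ∈ (0,1) there is a constant N′ depending only on N and q (one may take N′ = 1 + N/(1−q)) such that E[X^q] ≤ N′·E[C^q]. -/
open MeasureTheory
open scoped NNReal ENNReal
open Set

/-! By the layer cake formula `E[X^q] = ∫₀^∞ P(t ≤ X^q) dt`, and `t ≤ X^q` iff `t^{1/q} ≤ X`.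
Applying the tail estimate with `ε = δ = t^{1/q}`, the first term integrates back to `E[C^q]`,
while by Tonelli the second one is `N · E[∫₀^∞ t^{-1/q} min(t^{1/q}, C) dt]`; splitting the inner
integral at `t = C^q` evaluates it to `C^q + C^q q/(1-q) = C^q/(1-q)`. -/

lemma volume_Ioi_inter_setOf_ofReal_le (x : ℝ≥0∞) :
    volume (Ioi (0 : ℝ) ∩ {t | ENNReal.ofReal t ≤ x}) = x := by
  rcases eq_or_ne x ∞ with rfl | hx
  · simp
  · have hIoc : Ioi (0 : ℝ) ∩ {t | ENNReal.ofReal t ≤ x} = Ioc 0 x.toReal := by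
      ext t
      simp +contextual [ENNReal.ofReal_le_iff_le_toReal hx]
    rw [hIoc, Real.volume_Ioc, sub_zero, ENNReal.ofReal_toReal hx]

theorem lintegral_eq_lintegral_meas_ofReal_le {Ω : Type*} [MeasurableSpace Ω] (μ : Measure Ω)
    [SFinite μ] {g : Ω → ℝ≥0∞} (hg : Measurable g) :
    ∫⁻ ω, g ω ∂μ = ∫⁻ t in Ioi 0, μ {ω | ENNReal.ofReal t ≤ g ω} := by
  have hS : MeasurableSet {p : ℝ × Ω | ENNReal.ofReal p.1 ≤ g p.2} :=
    measurableSet_le (ENNReal.measurable_ofReal.comp measurable_fst) (hg.comp measurable_snd)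
  calc ∫⁻ ω, g ω ∂μ
        = ∫⁻ ω, volume.restrict (Ioi 0) {t | ENNReal.ofReal t ≤ g ω} ∂μ := by
        simp_rw [Measure.restrict_apply' measurableSet_Ioi, inter_comm,
          volume_Ioi_inter_setOf_ofReal_le]
    _ = ((volume.restrict (Ioi 0)).prod μ) {p : ℝ × Ω | ENNReal.ofReal p.1 ≤ g p.2} :=
        (Measure.prod_apply_symm hS).symm
    _ = ∫⁻ t in Ioi 0, μ {ω | ENNReal.ofReal t ≤ g ω} := Measure.prod_apply hS

lemma lintegral_Ioi_ofReal_rpow_neg {p a : ℝ} (hp : 1 < p) (ha : 0 < a) :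
    ∫⁻ t in Ioi a, ENNReal.ofReal (t ^ (-p)) = ENNReal.ofReal (a ^ (1 - p) / (p - 1)) := by
  have hp' : -p < -1 := by linarith
  rw [← ofReal_integral_eq_lintegral_ofReal (integrableOn_Ioi_rpow_of_lt hp' ha),
    integral_Ioi_rpow_of_lt hp' ha, neg_add_eq_sub, ← neg_sub p 1, neg_div_neg_eq]
  filter_upwards [ae_restrict_mem measurableSet_Ioi] with t ht
  exact Real.rpow_nonneg (ha.trans ht).le _

section

variable {q : ℝ}

lemma lintegral_Ioi_inv_rpow_mul_min_ofReal_le (hq0 : 0 < q) (hq1 : q < 1) {r : ℝ}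
    (hr : 0 < r) :
    ∫⁻ t in Ioi (0 : ℝ),
        (ENNReal.ofReal t ^ q⁻¹)⁻¹ * min (ENNReal.ofReal t ^ q⁻¹) (ENNReal.ofReal r)
      ≤ ENNReal.ofReal (r ^ q / (1 - q)) := by
  have hq_inv : 1 < q⁻¹ := one_lt_inv₀ hq0 |>.mpr hq1
  set a := r ^ q
  have ha : 0 < a := Real.rpow_pos_of_pos hr q
  have hbelow : ∫⁻ t in Ioc (0 : ℝ) a,
      (ENNReal.ofReal t ^ q⁻¹)⁻¹ * min (ENNReal.ofReal t ^ q⁻¹) (ENNReal.ofReal r)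
        ≤ ENNReal.ofReal a :=
    calc _ ≤ ∫⁻ _ in Ioc (0 : ℝ) a, 1 :=
          setLIntegral_mono' measurableSet_Ioc fun t _ =>
            (mul_le_mul_right (min_le_left _ _) _).trans (ENNReal.inv_mul_le_one _)
      _ = ENNReal.ofReal a := by rw [setLIntegral_one, Real.volume_Ioc, sub_zero]
  have habove : ∫⁻ t in Ioi a,
      (ENNReal.ofReal t ^ q⁻¹)⁻¹ * min (ENNReal.ofReal t ^ q⁻¹) (ENNReal.ofReal r)
        ≤ ENNReal.ofReal r * ENNReal.ofReal (a ^ (1 - q⁻¹) / (q⁻¹ - 1)) :=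
    calc _ ≤ ∫⁻ t in Ioi a, ENNReal.ofReal r * ENNReal.ofReal (t ^ (-q⁻¹)) := by
          refine setLIntegral_mono' measurableSet_Ioi fun t ht => ?_
          rw [mul_comm, ← ENNReal.ofReal_rpow_of_pos (ha.trans ht), ENNReal.rpow_neg]
          exact mul_le_mul_left (min_le_right _ _) _
      _ = _ := by
          rw [lintegral_const_mul' _ _ ENNReal.ofReal_ne_top,
            lintegral_Ioi_ofReal_rpow_neg hq_inv ha]
  calc _ = _ + _ := by
        rw [← Ioc_union_Ioi_eq_Ioi ha.le, lintegral_union measurableSet_Ioi Ioc_disjoint_Ioi_same]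
    _ ≤ ENNReal.ofReal a + ENNReal.ofReal r * ENNReal.ofReal (a ^ (1 - q⁻¹) / (q⁻¹ - 1)) :=
        add_le_add hbelow habove
    _ = ENNReal.ofReal (r ^ q / (1 - q)) := by
        have hq1' : 1 - q ≠ 0 := by linarith
        rw [← ENNReal.ofReal_mul hr.le, ← ENNReal.ofReal_add ha.le
          (mul_nonneg hr.le (div_nonneg (by positivity) (by linarith)))]
        congr 1
        rw [← Real.rpow_mul hr.le, mul_sub, mul_one, mul_inv_cancel₀ hq0.ne',
          Real.rpow_sub_one hr.ne']
        field_simp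
        ring

lemma lintegral_Ioi_inv_rpow_mul_min_le (hq0 : 0 < q) (hq1 : q < 1) (u : ℝ≥0∞) :
    ∫⁻ t in Ioi (0 : ℝ), (ENNReal.ofReal t ^ q⁻¹)⁻¹ * min (ENNReal.ofReal t ^ q⁻¹) u
      ≤ (ENNReal.ofReal (1 - q))⁻¹ * u ^ q := by
  rcases eq_or_ne u ∞ with rfl | hu
  · simp [ENNReal.top_rpow_of_pos hq0, ENNReal.mul_top]
  rcases eq_or_ne u 0 with rfl | hu0
  · simp
  obtain ⟨r, hr, rfl⟩ : ∃ r, 0 < r ∧ u = ENNReal.ofReal r :=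
    ⟨u.toReal, ENNReal.toReal_pos hu0 hu, (ENNReal.ofReal_toReal hu).symm⟩
  calc _ ≤ ENNReal.ofReal (r ^ q / (1 - q)) :=
        lintegral_Ioi_inv_rpow_mul_min_ofReal_le hq0 hq1 hr
    _ = _ := by
      rw [div_eq_inv_mul, ENNReal.ofReal_mul (inv_nonneg.mpr (by linarith)),
        ENNReal.ofReal_inv_of_pos (by linarith), ENNReal.ofReal_rpow_of_pos hr]

lemma lintegral_Ioi_inv_rpow_mul_lintegral_min_le {Ω : Type*} [MeasurableSpace Ω]
    (μ : Measure Ω) [SFinite μ] {C : Ω → ℝ≥0∞} (hC : Measurable C) (hq0 : 0 < q)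
    (hq1 : q < 1) :
    ∫⁻ t in Ioi (0 : ℝ),
        (ENNReal.ofReal t ^ q⁻¹)⁻¹ * ∫⁻ ω, min (ENNReal.ofReal t ^ q⁻¹) (C ω) ∂μ
      ≤ (ENNReal.ofReal (1 - q))⁻¹ * ∫⁻ ω, C ω ^ q ∂μ := by
  have hφ : Measurable fun p : ℝ × Ω => ENNReal.ofReal p.1 ^ q⁻¹ :=
    (ENNReal.measurable_ofReal.comp measurable_fst).pow_const _
  calc _ = ∫⁻ t in Ioi (0 : ℝ), ∫⁻ ω,
          (ENNReal.ofReal t ^ q⁻¹)⁻¹ * min (ENNReal.ofReal t ^ q⁻¹) (C ω) ∂μ :=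
        lintegral_congr fun t => (lintegral_const_mul _ (measurable_const.min hC)).symm
    _ = ∫⁻ ω, (∫⁻ t in Ioi (0 : ℝ),
          (ENNReal.ofReal t ^ q⁻¹)⁻¹ * min (ENNReal.ofReal t ^ q⁻¹) (C ω)) ∂μ :=
        lintegral_lintegral_swap (hφ.inv.mul (hφ.min (hC.comp measurable_snd))).aemeasurable
    _ ≤ ∫⁻ ω, (ENNReal.ofReal (1 - q))⁻¹ * C ω ^ q ∂μ :=
        lintegral_mono fun ω => lintegral_Ioi_inv_rpow_mul_min_le hq0 hq1 (C ω)
    _ = _ := lintegral_const_mul _ (hC.pow_const q)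

end

theorem moment_estimate_of_tail_estimate_general
    {Ω : Type*} {m0 : MeasurableSpace Ω} (P : Measure Ω) [IsProbabilityMeasure P]
    (X C : Ω → ℝ≥0∞) (hX : Measurable X) (hC : Measurable C)
    (N : ℝ≥0∞)
    (h : ∀ ε δ : ℝ≥0, 0 < ε → 0 < δ →
      P {ω | (δ : ℝ≥0∞) ≤ X ω} ≤
        P {ω | (ε : ℝ≥0∞) ≤ C ω} + (N / δ) * ∫⁻ ω, min (ε : ℝ≥0∞) (C ω) ∂P)
    (q : ℝ) (hq0 : 0 < q) (hq1 : q < 1) :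
    ∫⁻ ω, X ω ^ q ∂P ≤ (1 + N / ENNReal.ofReal (1 - q)) * ∫⁻ ω, C ω ^ q ∂P := by
  set φ : ℝ → ℝ≥0∞ := fun t => ENNReal.ofReal t ^ q⁻¹
  have hφ : Measurable φ := ENNReal.measurable_ofReal.pow_const _
  have hlevel : ∀ t x, ENNReal.ofReal t ≤ x ^ q ↔ φ t ≤ x :=
    fun t x => (ENNReal.rpow_inv_le_iff hq0).symm
  have htail : ∀ t ∈ Ioi (0 : ℝ), P {ω | φ t ≤ X ω} ≤
      P {ω | φ t ≤ C ω} + N * ((φ t)⁻¹ * ∫⁻ ω, min (φ t) (C ω) ∂P) := by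
    intro t ht
    have hδ : 0 < t.toNNReal ^ q⁻¹ := NNReal.rpow_pos (Real.toNNReal_pos.mpr ht)
    have hφt : ((t.toNNReal ^ q⁻¹ : ℝ≥0) : ℝ≥0∞) = φ t :=
      ENNReal.coe_rpow_of_nonneg _ (inv_nonneg.mpr hq0.le)
    simpa only [hφt, div_eq_mul_inv, mul_assoc] using h _ _ hδ hδ
  have hmin : Monotone fun x => ∫⁻ ω, min x (C ω) ∂P :=
    fun _ _ hxy => lintegral_mono fun ω => min_le_min_right _ hxy
  have hB : Measurable fun t => (φ t)⁻¹ * ∫⁻ ω, min (φ t) (C ω) ∂P :=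
    hφ.inv.mul (hmin.measurable.comp hφ)
  calc ∫⁻ ω, X ω ^ q ∂P = ∫⁻ t in Ioi 0, P {ω | φ t ≤ X ω} := by
        simp_rw [lintegral_eq_lintegral_meas_ofReal_le P (hX.pow_const q), hlevel]
    _ ≤ ∫⁻ t in Ioi 0,
          P {ω | φ t ≤ C ω} + N * ((φ t)⁻¹ * ∫⁻ ω, min (φ t) (C ω) ∂P) :=
        setLIntegral_mono' measurableSet_Ioi htail
    _ = ∫⁻ ω, C ω ^ q ∂P
          + N * ∫⁻ t in Ioi 0, (φ t)⁻¹ * ∫⁻ ω, min (φ t) (C ω) ∂P := by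
        simp_rw [lintegral_add_right _ (hB.const_mul N), lintegral_const_mul N hB,
          lintegral_eq_lintegral_meas_ofReal_le P (hC.pow_const q), hlevel]
    _ ≤ ∫⁻ ω, C ω ^ q ∂P + N * ((ENNReal.ofReal (1 - q))⁻¹ * ∫⁻ ω, C ω ^ q ∂P) := by
        gcongr
        exact lintegral_Ioi_inv_rpow_mul_lintegral_min_le P hC hq0 hq1
    _ = (1 + N / ENNReal.ofReal (1 - q)) * ∫⁻ ω, C ω ^ q ∂P := by
        rw [div_eq_mul_inv, add_mul, one_mul, mul_assoc]

/-- abstract form of the second Corollary of Lemma 3.28.1 of the paper.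
If `X`, `C` are `[0,∞]`-valued random variables and `N > 0` is a constant such that
`P(X ≥ δ) ≤ P(C ≥ ε) + (N/δ)·E[min(ε, C)]` for all `ε, δ > 0`, then for every `q ∈ (0,1)`
one has `E[X^q] ≤ N′ · E[C^q]` with `N′ = 1 + N/(1−q)`, a constant depending only on `N`
and `q`. -/
theorem moment_estimate_of_tail_estimate
    {Ω : Type*} {m0 : MeasurableSpace Ω} (P : Measure Ω) [IsProbabilityMeasure P]
    (X C : Ω → ℝ≥0∞) (hX : Measurable X) (hC : Measurable C)
    (N : ℝ≥0∞) (hN : 0 < N)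
    (h : ∀ ε δ : ℝ≥0, 0 < ε → 0 < δ →
      P {ω | (δ : ℝ≥0∞) ≤ X ω} ≤
        P {ω | (ε : ℝ≥0∞) ≤ C ω} + (N / δ) * ∫⁻ ω, min (ε : ℝ≥0∞) (C ω) ∂P)
    (q : ℝ) (hq0 : 0 < q) (hq1 : q < 1) :
    ∫⁻ ω, X ω ^ q ∂P ≤ (1 + N / ENNReal.ofReal (1 - q)) * ∫⁻ ω, C ω ^ q ∂P :=
  moment_estimate_of_tail_estimate_general (m0 := m0) P X C hX hC N h q hq0 hq1
end
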